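/- Let G be a bipartite cactus graph with n ≥ 4 vertices and m edges whose degree sequence d satisfies β ≥ 1, where β = max{μ_1, (μ_1+μ_odd)/2}. Then m ≤ ⌊(4(n−1) − β)/3⌋. -/

import Mathlib

open Finset SimpleGraph

/-- The degree of a vertex `v`: the number of its neighbors in `G`. -/
noncomputable def gdeg {V : Type*} (G : SimpleGraph V) (v : V) : ℕ :=
  (G.neighborSet v).ncard

/-- The set of edge sets of cycles of `G`.  A cycle (as a subgraph) is identified
with its set of edges, which is invariant under rotation and reversal of the
corresponding closed walks. -/
def cycleEdgeSets {V : Type*} (G : SimpleGraph V) : Set (Set (Sym2 V)) :=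
  {s | ∃ (u : V) (w : G.Walk u u), w.IsCycle ∧ s = {e | e ∈ w.edges}}

/-- The number of cycles of `G`. -/
noncomputable def numCycles {V : Type*} (G : SimpleGraph V) : ℕ :=
  (cycleEdgeSets G).ncard

/-- A cactus graph: a connected graph in which every edge belongs to at most one
cycle, i.e. any two cycles sharing an edge coincide. -/
def IsCactus {V : Type*} (G : SimpleGraph V) : Prop :=
  G.Connected ∧
    ∀ s₁ ∈ cycleEdgeSets G, ∀ s₂ ∈ cycleEdgeSets G, (s₁ ∩ s₂).Nonempty → s₁ = s₂

/-- A unicyclic graph: a connected graph containing exactly one cycle. -/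
def IsUnicyclic {V : Type*} (G : SimpleGraph V) : Prop :=
  G.Connected ∧ ∃! s, s ∈ cycleEdgeSets G

/-- A graph is bridge-less if it has no bridge. -/
def BridgeLess {V : Type*} (G : SimpleGraph V) : Prop :=
  ∀ e, ¬ G.IsBridge e

/-- The number of bridges of `G`. -/
noncomputable def bridgeCount {V : Type*} (G : SimpleGraph V) : ℕ :=
  {e : Sym2 V | G.IsBridge e}.ncard

/-- A triangulated cactus: a cactus in which every cycle has length three and
every edge belongs to a cycle. -/
def IsTriangulatedCactus {V : Type*} (G : SimpleGraph V) : Prop :=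
  IsCactus G ∧ (∀ (u : V) (w : G.Walk u u), w.IsCycle → w.length = 3) ∧
    ∀ e ∈ G.edgeSet, ∃ (u : V) (w : G.Walk u u), w.IsCycle ∧ e ∈ w.edges

/-- The connected component of `x` in `G` contains a cycle. -/
def HasCycleFrom {V : Type*} (G : SimpleGraph V) (x : V) : Prop :=
  ∃ (u : V) (w : G.Walk u u), w.IsCycle ∧ G.Reachable x u

/-- A core cactus: a cactus graph with no bridge whose removal splits the graph
into two components each containing a cycle. -/
def IsCoreCactus {V : Type*} (G : SimpleGraph V) : Prop :=
  IsCactus G ∧ ∀ u v : V, G.IsBridge s(u, v) →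
    ¬ (HasCycleFrom (G.deleteEdges {s(u, v)}) u ∧
       HasCycleFrom (G.deleteEdges {s(u, v)}) v)

/-- `d 1, …, d n` is a degree sequence: non-increasing, with positive entries
bounded by `n - 1`, and with even sum. -/
def IsDegSeq (n : ℕ) (d : ℕ → ℕ) : Prop :=
  (∀ i j, 1 ≤ i → i ≤ j → j ≤ n → d j ≤ d i) ∧
  (∀ i, 1 ≤ i → i ≤ n → 1 ≤ d i ∧ d i ≤ n - 1) ∧
  Even (∑ i ∈ Finset.Icc 1 n, d i)

/-- A graph `G` on vertex set `{1, …, n}` realizes the sequence `d 1, …, d n`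
if the degree of vertex `i` is `d i` for every `i`. -/
def Realizes {n : ℕ} (G : SimpleGraph (Fin n)) (d : ℕ → ℕ) : Prop :=
  ∀ i : Fin n, gdeg G i = d (i.1 + 1)

/-- `μ₁`: the number of entries of the sequence equal to `1`. -/
def mu1 (n : ℕ) (d : ℕ → ℕ) : ℕ :=
  ((Finset.Icc 1 n).filter fun i => d i = 1).card

/-- `μ_odd`: the number of odd entries of the sequence that are greater than `1`. -/
def muOdd (n : ℕ) (d : ℕ → ℕ) : ℕ :=
  ((Finset.Icc 1 n).filter fun i => Odd (d i) ∧ 1 < d i).card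

/-- The bridge parameter `β = max {μ₁, (μ₁ + μ_odd)/2}` of a sequence. -/
def seqBeta (n : ℕ) (d : ℕ → ℕ) : ℕ :=
  max (mu1 n d) ((mu1 n d + muOdd n d) / 2)

/-- `μ₁` of a graph: the number of vertices of degree `1`. -/
noncomputable def gmu1 {V : Type*} (G : SimpleGraph V) : ℕ :=
  {v : V | gdeg G v = 1}.ncard

/-- `μ_odd` of a graph: the number of vertices of odd degree greater than `1`. -/
noncomputable def gmuOdd {V : Type*} (G : SimpleGraph V) : ℕ :=
  {v : V | Odd (gdeg G v) ∧ 1 < gdeg G v}.ncard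

/-- The bridge parameter `β = max {μ₁, (μ₁ + μ_odd)/2}` of a graph. -/
noncomputable def graphBeta {V : Type*} (G : SimpleGraph V) : ℕ :=
  max (gmu1 G) ((gmu1 G + gmuOdd G) / 2)

/-!
Write `m`, `n`, `b` and `c` for the numbers of edges, vertices, bridges and cycles. Every edge
outside a spanning tree closes its own fundamental cycle, so `m + 1 ≤ n + c`. In a cactus the
cycles are edge-disjoint and cover exactly the non-bridge edges, and in a bipartite graph each
has at least four edges, so `b + 4c ≤ m`. Eliminating `c` gives `3m ≤ 4(n - 1) - b`.

It remains to see `β ≤ b`. The edge at a leaf is a bridge, and two leaves share it only in `K₂`,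
so `μ₁ ≤ b`. If no edge at `v` is a bridge, the cycles through `v` pair up its neighbours, so
`v` has even degree; hence every vertex of odd degree is an endpoint of a bridge, and
`μ₁ + μ_odd ≤ 2b`.
-/

section

variable {V : Type*} {G : SimpleGraph V}

lemma not_isBridge_iff_exists_mem_cycleEdgeSets {e : Sym2 V} (he : e ∈ G.edgeSet) :
    ¬ G.IsBridge e ↔ ∃ s ∈ cycleEdgeSets G, e ∈ s := by
  rw [isBridge_iff_forall_cycle_notMem he]
  push Not
  constructor
  · rintro ⟨u, p, hp, hep⟩
    exact ⟨_, ⟨u, p, hp, rfl⟩, hep⟩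
  · rintro ⟨_, ⟨u, p, hp, rfl⟩, hep⟩
    exact ⟨u, p, hp, hep⟩

lemma subset_edgeSet_of_mem_cycleEdgeSets {s : Set (Sym2 V)} (hs : s ∈ cycleEdgeSets G) :
    s ⊆ G.edgeSet := by
  obtain ⟨u, p, -, rfl⟩ := hs
  exact fun _ he ↦ p.edges_subset_edgeSet he

lemma IsCactus.eq_of_mem {s₁ s₂ : Set (Sym2 V)} (hG : IsCactus G) (hs₁ : s₁ ∈ cycleEdgeSets G)
    (hs₂ : s₂ ∈ cycleEdgeSets G) {e : Sym2 V} (he₁ : e ∈ s₁) (he₂ : e ∈ s₂) : s₁ = s₂ :=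
  hG.2 s₁ hs₁ s₂ hs₂ ⟨e, he₁, he₂⟩

lemma exists_mem_cycleEdgeSets_diff_eq_singleton {T : SimpleGraph V} (hT : T.Connected)
    (hTG : T ≤ G) {u v : V} (h : G.Adj u v) (huv : ¬ T.Adj u v) :
    ∃ s ∈ cycleEdgeSets G, s \ T.edgeSet = {s(u, v)} := by
  obtain ⟨p, hp⟩ := hT.exists_isPath v u
  have hpT : ∀ e ∈ (p.mapLe hTG).edges, e ∈ T.edgeSet := by
    rw [Walk.edges_mapLe_eq_edges]
    exact fun e he ↦ p.edges_subset_edgeSet he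
  have hc : (Walk.cons h (p.mapLe hTG)).IsCycle :=
    (Walk.cons_isCycle_iff _ h).mpr ⟨hp.mapLe hTG, fun he ↦ huv (hpT _ he)⟩
  refine ⟨_, ⟨u, _, hc, rfl⟩, ?_⟩
  ext e
  simp only [Walk.edges_cons, Set.mem_sdiff, Set.mem_ofPred_eq, List.mem_cons,
    Set.mem_singleton_iff]
  constructor
  · rintro ⟨he | he, heT⟩
    · exact he
    · exact absurd (hpT e he) heT
  · rintro rfl
    exact ⟨.inl rfl, huv⟩

lemma SimpleGraph.Connected.ncard_edgeSet_add_one_le [Finite V] (hG : G.Connected) :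
    G.edgeSet.ncard + 1 ≤ Nat.card V + numCycles G := by
  obtain ⟨T, hTG, hT⟩ := hG.exists_isTree_le
  have hTcard : T.edgeSet.ncard + 1 = Nat.card V := by
    rw [← Nat.card_coe_set_eq]
    exact (isTree_iff_connected_and_card.mp hT).2
  have hfund : ∀ e ∈ G.edgeSet \ T.edgeSet, ∃ s ∈ cycleEdgeSets G, s \ T.edgeSet = {e} := by
    rintro ⟨u, v⟩ ⟨h, huv⟩
    exact exists_mem_cycleEdgeSets_diff_eq_singleton hT.connected hTG h huv
  choose! f hf hfe using hfund
  have hcotree : (G.edgeSet \ T.edgeSet).ncard ≤ numCycles G :=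
    Set.ncard_le_ncard_of_injOn f hf (fun e he e' he' heq ↦
      Set.singleton_injective ((hfe e he).symm.trans (heq ▸ hfe e' he'))) (Set.toFinite _)
  have hsplit := Set.ncard_sdiff_add_ncard_of_subset (edgeSet_subset_edgeSet.mpr hTG)
    (Set.toFinite G.edgeSet)
  omega

lemma iUnion_cycleEdgeSets_eq_edgeSet_diff :
    ⋃ s ∈ cycleEdgeSets G, s = G.edgeSet \ {e | G.IsBridge e} := by
  ext e
  simp only [Set.mem_iUnion, Set.mem_sdiff, Set.mem_ofPred_eq, exists_prop]
  constructor
  · rintro ⟨s, hs, he⟩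
    have hG := subset_edgeSet_of_mem_cycleEdgeSets hs he
    exact ⟨hG, (not_isBridge_iff_exists_mem_cycleEdgeSets hG).mpr ⟨s, hs, he⟩⟩
  · rintro ⟨hG, hb⟩
    exact (not_isBridge_iff_exists_mem_cycleEdgeSets hG).mp hb

lemma IsCactus.bridgeCount_add_mul_numCycles_le [Finite V] (hG : IsCactus G) {k : ℕ}
    (hk : ∀ s ∈ cycleEdgeSets G, k ≤ s.ncard) :
    bridgeCount G + k * numCycles G ≤ G.edgeSet.ncard := by
  have hfin : (cycleEdgeSets G).Finite := Set.toFinite _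
  have hdisj : (cycleEdgeSets G).PairwiseDisjoint id := fun s hs t ht hst ↦
    Set.disjoint_left.mpr fun e hes het ↦ hst (hG.eq_of_mem hs ht hes het)
  have hcycles : k * numCycles G ≤ (⋃ s ∈ cycleEdgeSets G, s).ncard := by
    have hsum := hfin.ncard_biUnion (fun _ _ ↦ Set.toFinite _) hdisj
    dsimp only [id] at hsum
    rw [hsum, finsum_mem_eq_finite_toFinset_sum _ hfin, numCycles,
      Set.ncard_eq_toFinset_card _ hfin, mul_comm, ← smul_eq_mul]
    exact Finset.card_nsmul_le_sum _ _ _ fun s hs ↦ hk s (hfin.mem_toFinset.mp hs)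
  have hbridges : {e | G.IsBridge e} ⊆ G.edgeSet := by
    rintro ⟨u, v⟩ (hb : G.IsBridge s(u, v))
    exact hb.reachable_iff_adj.mp (hG.1.preconnected u v)
  rw [iUnion_cycleEdgeSets_eq_edgeSet_diff] at hcycles
  have hsplit := Set.ncard_sdiff_add_ncard_of_subset hbridges (Set.toFinite G.edgeSet)
  rw [bridgeCount]
  omega

lemma four_le_ncard_of_mem_cycleEdgeSets (hbip : G.Colorable 2) {s : Set (Sym2 V)}
    (hs : s ∈ cycleEdgeSets G) : 4 ≤ s.ncard := by
  classical
  obtain ⟨u, p, hp, rfl⟩ := hs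
  have hlen : {e | e ∈ p.edges}.ncard = p.length := by
    rw [← Walk.length_edges, ← List.toFinset_card_of_nodup hp.edges_nodup, ← Set.ncard_coe_finset]
    simp
  obtain ⟨k, hk⟩ := two_colorable_iff_forall_loop_even.mp hbip u p
  have := hp.three_le_length
  omega

lemma ncard_setOf_mk_mem_eq_two {s : Set (Sym2 V)} (hs : s ∈ cycleEdgeSets G) {v b : V}
    (hb : s(v, b) ∈ s) : {w | s(v, w) ∈ s}.ncard = 2 := by
  obtain ⟨u, p, hp, rfl⟩ := hs
  rw [← hp.ncard_neighborSet_toSubgraph_eq_two (p.fst_mem_support_of_mem_edges hb)]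
  congr 1
  ext w
  exact Walk.adj_toSubgraph_iff_mem_edges.symm

lemma two_le_gdeg_of_mem_cycleEdgeSets {s : Set (Sym2 V)} (hs : s ∈ cycleEdgeSets G) {v b : V}
    (hb : s(v, b) ∈ s) (hfin : (G.neighborSet v).Finite) : 2 ≤ gdeg G v := by
  rw [← ncard_setOf_mk_mem_eq_two hs hb]
  exact Set.ncard_le_ncard (fun w hw ↦ subset_edgeSet_of_mem_cycleEdgeSets hs hw) hfin

lemma isBridge_of_gdeg_eq_one {v w : V} (hv : gdeg G v = 1) (h : G.Adj v w) :
    G.IsBridge s(v, w) := by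
  by_contra hb
  obtain ⟨s, hs, hvw⟩ := (not_isBridge_iff_exists_mem_cycleEdgeSets h).mp hb
  have hfin : (G.neighborSet v).Finite := Set.finite_of_ncard_pos (by rw [gdeg] at hv; omega)
  have := two_le_gdeg_of_mem_cycleEdgeSets hs hvw hfin
  omega

lemma IsCactus.exists_isBridge_of_odd_gdeg (hG : IsCactus G) {v : V} (hodd : Odd (gdeg G v)) :
    ∃ w, G.IsBridge s(v, w) := by
  classical
  by_contra! hnb
  have hfin : (G.neighborSet v).Finite := Set.finite_of_ncard_ne_zero (by
    rw [gdeg] at hodd; exact hodd.pos.ne')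
  have hcyc : ∀ w ∈ G.neighborSet v, ∃ s ∈ cycleEdgeSets G, s(v, w) ∈ s := fun w hw ↦
    (not_isBridge_iff_exists_mem_cycleEdgeSets hw).mp (hnb w)
  choose! f hf hvf using hcyc
  set N := hfin.toFinset
  have hfiber : ∀ s ∈ N.image f, #{w ∈ N | f w = s} = 2 := by
    intro s hs
    obtain ⟨w₀, hw₀, rfl⟩ := Finset.mem_image.mp hs
    rw [Set.Finite.mem_toFinset] at hw₀
    rw [← ncard_setOf_mk_mem_eq_two (hf w₀ hw₀) (hvf w₀ hw₀), ← Set.ncard_coe_finset]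
    congr 1
    ext w
    simp only [Finset.coe_filter, Set.Finite.mem_toFinset, Set.mem_ofPred_eq, N]
    constructor
    · rintro ⟨hw, hfw⟩
      exact hfw ▸ hvf w hw
    · intro hw
      have hadj : G.Adj v w := subset_edgeSet_of_mem_cycleEdgeSets (hf w₀ hw₀) hw
      exact ⟨hadj, hG.eq_of_mem (hf w hadj) (hf w₀ hw₀) (hvf w hadj) hw⟩
  have hN : gdeg G v = #(N.image f) * 2 := by
    rw [gdeg, Set.ncard_eq_toFinset_card _ hfin, Finset.card_eq_sum_card_image f N,
      Finset.sum_const_nat hfiber]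
  rw [hN] at hodd
  exact Nat.not_even_iff_odd.mpr hodd (even_two.mul_left _)

lemma eq_of_adj_of_gdeg_eq_one {v w w' : V} (hv : gdeg G v = 1) (hw : G.Adj v w)
    (hw' : G.Adj v w') : w = w' := by
  obtain ⟨a, ha⟩ := Set.ncard_eq_one.mp hv
  have hw : w ∈ G.neighborSet v := hw
  have hw' : w' ∈ G.neighborSet v := hw'
  rw [ha] at hw hw'
  exact hw.trans hw'.symm

lemma SimpleGraph.Connected.card_le_two_of_adj_of_gdeg_eq_one (hconn : G.Connected) {v w : V}
    (h : G.Adj v w) (hv : gdeg G v = 1) (hw : gdeg G w = 1) : Nat.card V ≤ 2 := by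
  have hall : ∀ z, z ∈ ({v, w} : Set V) := by
    by_contra! ⟨z, hz⟩
    obtain ⟨d, -, hd, hd'⟩ := (hconn v z).some.exists_boundary_dart _ (Set.mem_insert v _) hz
    rcases hd with hd | hd
    · exact hd' (.inr (eq_of_adj_of_gdeg_eq_one hv (hd ▸ d.adj) h))
    · exact hd' (.inl (eq_of_adj_of_gdeg_eq_one hw (hd ▸ d.adj) h.symm))
  rw [← Set.ncard_univ, ← Set.eq_univ_of_forall hall]
  exact (Set.ncard_insert_le v {w}).trans (by rw [Set.ncard_singleton])

lemma gmu1_le_bridgeCount [Finite V] (hconn : G.Connected) (hV : 3 ≤ Nat.card V) :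
    gmu1 G ≤ bridgeCount G := by
  have hleaf : ∀ v ∈ {v | gdeg G v = 1}, ∃ w, G.Adj v w := fun v (hv : gdeg G v = 1) ↦
    Set.nonempty_of_ncard_ne_zero (s := G.neighborSet v) (by rw [gdeg] at hv; omega)
  choose! nb hnb using hleaf
  refine Set.ncard_le_ncard_of_injOn (fun v ↦ s(v, nb v))
    (fun v hv ↦ isBridge_of_gdeg_eq_one hv (hnb v hv)) ?_ (Set.toFinite _)
  intro v hv v' hv' heq
  rcases Sym2.eq_iff.mp heq with ⟨h, -⟩ | ⟨-, hnbv⟩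
  · exact h
  · have := hconn.card_le_two_of_adj_of_gdeg_eq_one (hnbv ▸ hnb v hv) hv hv'
    omega

lemma ncard_le_two_mul_ncard_of_forall_exists_mem {s : Set V} {t : Set (Sym2 V)}
    (ht : t.Finite) (h : ∀ v ∈ s, ∃ e ∈ t, v ∈ e) : s.ncard ≤ 2 * t.ncard := by
  classical
  lift t to Finset (Sym2 V) using ht
  have hs : s ⊆ ↑(t.biUnion Sym2.toFinset) := fun v hv ↦ by
    simpa [Sym2.mem_toFinset] using h v hv
  calc s.ncard
    _ ≤ #(t.biUnion Sym2.toFinset) := by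
      simpa only [Set.ncard_coe_finset] using Set.ncard_le_ncard hs
    _ ≤ ∑ e ∈ t, #e.toFinset := Finset.card_biUnion_le
    _ ≤ ∑ _e ∈ t, 2 := Finset.sum_le_sum fun e _ ↦ by rw [Sym2.card_toFinset]; split_ifs <;> simp
    _ = 2 * (t : Set (Sym2 V)).ncard := by
      rw [Finset.sum_const, smul_eq_mul, Set.ncard_coe_finset, mul_comm]

lemma gmu1_add_gmuOdd [Finite V] : gmu1 G + gmuOdd G = {v | Odd (gdeg G v)}.ncard := by
  rw [gmu1, gmuOdd, ← Set.ncard_union_eq _ (Set.toFinite _) (Set.toFinite _)]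
  · congr 1
    ext v
    simp only [Set.mem_union, Set.mem_ofPred_eq]
    grind
  · exact Set.disjoint_left.mpr fun v (h₁ : gdeg G v = 1) (h₂ : _ ∧ _) ↦ by omega

lemma IsCactus.graphBeta_le_bridgeCount [Finite V] (hG : IsCactus G) (hV : 3 ≤ Nat.card V) :
    graphBeta G ≤ bridgeCount G := by
  have h₁ := gmu1_le_bridgeCount hG.1 hV
  have h₂ : gmu1 G + gmuOdd G ≤ 2 * bridgeCount G := by
    rw [gmu1_add_gmuOdd]
    refine ncard_le_two_mul_ncard_of_forall_exists_mem (Set.toFinite _) fun v hv ↦ ?_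
    obtain ⟨w, hw⟩ := hG.exists_isBridge_of_odd_gdeg hv
    exact ⟨_, hw, Sym2.mem_mk_left v w⟩
  rw [graphBeta]
  omega

end

theorem stmt8_general {V : Type*} [Fintype V] (G : SimpleGraph V) (hG : IsCactus G)
    (hbip : G.Colorable 2) (hn : 4 ≤ Fintype.card V) :
    G.edgeSet.ncard ≤ (4 * (Fintype.card V - 1) - graphBeta G) / 3 := by
  have hV : Nat.card V = Fintype.card V := Nat.card_eq_fintype_card
  have hrank := hG.1.ncard_edgeSet_add_one_le
  have hcycles := hG.bridgeCount_add_mul_numCycles_le fun _ ↦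
    four_le_ncard_of_mem_cycleEdgeSets hbip
  have hbeta := hG.graphBeta_le_bridgeCount (by omega)
  omega

/-- A bipartite cactus graph with `n ≥ 4` vertices and `β ≥ 1`
satisfies `m ≤ ⌊(4(n-1) - β)/3⌋`. -/
theorem stmt8 {V : Type*} [Fintype V] (G : SimpleGraph V) (hG : IsCactus G)
    (hbip : G.Colorable 2) (hn : 4 ≤ Fintype.card V) (hbeta : 1 ≤ graphBeta G) :
    G.edgeSet.ncard ≤ (4 * (Fintype.card V - 1) - graphBeta G) / 3 :=
  stmt8_general G hG hbip hn
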